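/- If a subspace L ⊆ V ⊕ V* is isotropic with respect to the antisymmetric pairing ⟨(v₁,η₁),(v₂,η₂)⟩₋ = ½(η₁(v₂) − η₂(v₁)) and dim L = dim V, then L satisfies both characteristic equations: ρ(L)° = L ∩ V* and ρ*(L)° = L ∩ V. -/

import Mathlib

/-!
Isotropy gives that `L ∩ V*` annihilates `ρ(L)` and that `L ∩ V` is annihilated by
`ρ*(L)`. Rank–nullity for `ρ` and `ρ*` restricted to `L` gives
`dim (L ∩ V*) = dim L - dim ρ(L) = dim V - dim ρ(L) = dim ρ(L)°`, and likewise for the other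
equation, so both inclusions are equalities.
-/

open Module LinearMap

section RankNullity

variable {K M N : Type*} [DivisionRing K] [AddCommGroup M] [Module K M]
  [AddCommGroup N] [Module K N]

theorem Submodule.finrank_map_add_finrank_inf_ker (f : M →ₗ[K] N) (L : Submodule K M)
    [FiniteDimensional K L] :
    finrank K (L.map f) + finrank K ↥(L ⊓ ker f) = finrank K L := by
  have h := (f.domRestrict L).finrank_range_add_finrank_ker
  rwa [range_domRestrict, ker_domRestrict, ← finrank_map_subtype_eq, map_comap_subtype] at h

theorem Submodule.finrank_comap_eq_finrank_inf_range {f : M →ₗ[K] N} (hf : Function.Injective f)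
    (L : Submodule K N) : finrank K (L.comap f) = finrank K ↥(L ⊓ range f) := by
  rw [(equivMapOfInjective f hf _).finrank_eq, map_comap_eq, inf_comm]

theorem Submodule.finrank_map_fst_add_finrank_comap_inr (L : Submodule K (M × N))
    [FiniteDimensional K L] :
    finrank K (L.map (LinearMap.fst K M N)) + finrank K (L.comap (inr K M N)) = finrank K L := by
  rw [finrank_comap_eq_finrank_inf_range inr_injective, range_inr]
  exact finrank_map_add_finrank_inf_ker _ L

theorem Submodule.finrank_map_snd_add_finrank_comap_inl (L : Submodule K (M × N))
    [FiniteDimensional K L] :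
    finrank K (L.map (LinearMap.snd K M N)) + finrank K (L.comap (inl K M N)) = finrank K L := by
  rw [finrank_comap_eq_finrank_inf_range inl_injective, ← ker_snd]
  exact finrank_map_add_finrank_inf_ker _ L

end RankNullity

section Isotropic

variable {K V : Type*} [Field K] [AddCommGroup V] [Module K V]
  {L : Submodule K (V × Dual K V)}

theorem comap_inr_le_dualAnnihilator_map_fst (hL : ∀ p ∈ L, ∀ q ∈ L, p.2 q.1 = q.2 p.1) :
    L.comap (inr K V (Dual K V)) ≤ (L.map (fst K V (Dual K V))).dualAnnihilator := by
  refine fun η hη => (Submodule.mem_dualAnnihilator _).2 ?_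
  rintro _ ⟨⟨w, ξ⟩, hwξ, rfl⟩
  simpa using hL (0, η) hη (w, ξ) hwξ

theorem comap_inl_le_dualCoannihilator_map_snd (hL : ∀ p ∈ L, ∀ q ∈ L, p.2 q.1 = q.2 p.1) :
    L.comap (inl K V (Dual K V)) ≤ (L.map (snd K V (Dual K V))).dualCoannihilator := by
  refine fun v hv => (Submodule.mem_dualCoannihilator _).2 ?_
  rintro _ ⟨⟨w, ξ⟩, hwξ, rfl⟩
  simpa using hL (w, ξ) hwξ (v, 0) hv

variable [FiniteDimensional K V]

theorem dualAnnihilator_map_fst_eq_comap_inr (hL : ∀ p ∈ L, ∀ q ∈ L, p.2 q.1 = q.2 p.1)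
    (hdim : finrank K L = finrank K V) :
    (L.map (fst K V (Dual K V))).dualAnnihilator = L.comap (inr K V (Dual K V)) := by
  refine (Submodule.eq_of_le_of_finrank_le (comap_inr_le_dualAnnihilator_map_fst hL) ?_).symm
  have := L.finrank_map_fst_add_finrank_comap_inr
  have := Subspace.finrank_add_finrank_dualAnnihilator_eq (L.map (fst K V (Dual K V)))
  omega

theorem dualCoannihilator_map_snd_eq_comap_inl (hL : ∀ p ∈ L, ∀ q ∈ L, p.2 q.1 = q.2 p.1)
    (hdim : finrank K L = finrank K V) :
    (L.map (snd K V (Dual K V))).dualCoannihilator = L.comap (inl K V (Dual K V)) := by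
  refine (Submodule.eq_of_le_of_finrank_le (comap_inl_le_dualCoannihilator_map_snd hL) ?_).symm
  have := L.finrank_map_snd_add_finrank_comap_inl
  have := Subspace.finrank_add_finrank_dualCoannihilator_eq (L.map (snd K V (Dual K V)))
  omega

end Isotropic

/-- A Lagrangian subspace for the antisymmetric pairing `⟨,⟩₋` satisfies both
characteristic equations. -/
theorem lagrangian_minus_characteristic {V : Type*} [AddCommGroup V] [Module ℝ V]
    [FiniteDimensional ℝ V] (L : Submodule ℝ (V × Module.Dual ℝ V))
    (hiso : ∀ p ∈ L, ∀ q ∈ L,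
      (1/2 : ℝ) * (p.2 q.1 - q.2 p.1) = 0)
    (hdim : Module.finrank ℝ L = Module.finrank ℝ V) :
    (Submodule.map (LinearMap.fst ℝ V (Module.Dual ℝ V)) L).dualAnnihilator
        = Submodule.comap (LinearMap.inr ℝ V (Module.Dual ℝ V)) L
    ∧ (Submodule.map (LinearMap.snd ℝ V (Module.Dual ℝ V)) L).dualCoannihilator
        = Submodule.comap (LinearMap.inl ℝ V (Module.Dual ℝ V)) L := by
  have hL : ∀ p ∈ L, ∀ q ∈ L, p.2 q.1 = q.2 p.1 := fun p hp q hq => by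
    linarith [hiso p hp q hq]
  exact ⟨dualAnnihilator_map_fst_eq_comap_inr hL hdim,
    dualCoannihilator_map_snd_eq_comap_inl hL hdim⟩
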